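/- (Modular boundedness of Kantorovich NN operators) Let φ be a convex φ-function, σ a sigmoidal function satisfying the standing assumptions (σ non-decreasing, σ(x)-1/2 odd, σ ∈ C² concave for x ≥ 0, σ(1) < 1, decay condition (S3)), and f ∈ L^φ([a,b]). Then for every λ > 0, I^φ[λ K_n f] ≤ φ_σ(2)^{-1} I^φ[λ f], where I^φ[g] = ∫_a^b φ(|g(x)|) dx and K_n f(x) = (Σ_k [n ∫_{k/n}^{(k+1)/n} f(u) du] φ_σ(nx - k)) / (Σ_k φ_σ(nx - k)), with k ranging over ⌈na⌉ ≤ k ≤ ⌊nb⌋ - 1. -/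

import Mathlib

open Filter MeasureTheory
open scoped ENNReal

noncomputable def phiSigma (σ : ℝ → ℝ) (x : ℝ) : ℝ := (σ (x + 1) - σ (x - 1)) / 2

section aux
variable {σ : ℝ → ℝ}

lemma sigma_le_one (hmono : Monotone σ) (h1 : Tendsto σ atTop (nhds 1)) (x : ℝ) : σ x ≤ 1 :=
  ge_of_tendsto h1 (Filter.eventually_atTop.2 ⟨x, fun _ hy => hmono hy⟩)

lemma sigma_nonneg (hmono : Monotone σ) (h0 : Tendsto σ atBot (nhds 0)) (x : ℝ) : 0 ≤ σ x :=
  le_of_tendsto h0 (Filter.eventually_atBot.2 ⟨x, fun _ hy => hmono hy⟩)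

lemma sigma_zero (hodd : ∀ x : ℝ, σ (-x) - 1/2 = -(σ x - 1/2)) : σ 0 = 1/2 := by
  have h := hodd 0; rw [neg_zero] at h; linarith

lemma sigma_neg (hodd : ∀ x : ℝ, σ (-x) - 1/2 = -(σ x - 1/2)) (x : ℝ) : σ (-x) = 1 - σ x := by
  have h := hodd x; linarith

lemma phiSigma_nonneg (hmono : Monotone σ) (x : ℝ) : 0 ≤ phiSigma σ x := by
  have : σ (x - 1) ≤ σ (x + 1) := hmono (by linarith)
  unfold phiSigma; linarith

lemma phiSigma_even (hodd : ∀ x : ℝ, σ (-x) - 1/2 = -(σ x - 1/2)) (x : ℝ) :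
    phiSigma σ (-x) = phiSigma σ x := by
  unfold phiSigma
  have e1 : -x + 1 = -(x - 1) := by ring
  have e2 : -x - 1 = -(x + 1) := by ring
  rw [e1, e2, sigma_neg hodd, sigma_neg hodd]; ring

lemma phiSigma_anti (hconc : ConcaveOn ℝ (Set.Ici 0) σ) {y x : ℝ} (hy : 1 ≤ y) (hxy : y ≤ x) :
    phiSigma σ x ≤ phiSigma σ y := by
  rcases eq_or_lt_of_le hxy with rfl | hlt
  · exact le_refl _
  set t : ℝ := 2 / (x - y + 2) with ht
  have hd : (0:ℝ) < x - y + 2 := by linarith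
  have ht0 : 0 ≤ t := by positivity
  have ht1 : t ≤ 1 := by rw [ht, div_le_one hd]; linarith
  have hy1 : (y - 1 : ℝ) ∈ Set.Ici (0:ℝ) := by simp; linarith
  have hx1 : (x + 1 : ℝ) ∈ Set.Ici (0:ℝ) := by simp; linarith
  have h1 := hconc.2 hy1 hx1 (by linarith : (0:ℝ) ≤ 1 - t) ht0 (by ring)
  have h2 := hconc.2 hy1 hx1 ht0 (by linarith : (0:ℝ) ≤ 1 - t) (by ring)
  simp only [smul_eq_mul] at h1 h2
  have e1 : (1 - t) * (y - 1) + t * (x + 1) = y + 1 := by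
    rw [ht]; field_simp; ring
  have e2 : t * (y - 1) + (1 - t) * (x + 1) = x - 1 := by
    rw [ht]; field_simp; ring
  rw [e1] at h1; rw [e2] at h2
  unfold phiSigma; linarith

lemma phiSigma_two_pos (hmono : Monotone σ) (h1 : Tendsto σ atTop (nhds 1))
    (hconc : ConcaveOn ℝ (Set.Ici 0) σ) (hσ1 : σ 1 < 1) : 0 < phiSigma σ 2 := by
  have key : σ 1 < σ 3 := by
    by_contra hle
    push_neg at hle
    have heq : σ 3 = σ 1 := le_antisymm hle (hmono (by norm_num))
    have hub : ∀ x : ℝ, 3 ≤ x → σ x ≤ σ 1 := by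
      intro x hx
      set t : ℝ := 2 / (x - 1) with ht
      have hd : (0:ℝ) < x - 1 := by linarith
      have ht0 : 0 ≤ t := by positivity
      have ht1 : t ≤ 1 := by rw [ht, div_le_one hd]; linarith
      have hc := hconc.2 (show (1:ℝ) ∈ Set.Ici (0:ℝ) by norm_num)
        (show x ∈ Set.Ici (0:ℝ) by simp; linarith)
        (by linarith : (0:ℝ) ≤ 1 - t) ht0 (by ring)
      simp only [smul_eq_mul] at hc
      have e1 : (1 - t) * 1 + t * x = 3 := by rw [ht]; field_simp; ring
      rw [e1, heq] at hc
      have htpos : 0 < t := by positivity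
      nlinarith
    have : (1:ℝ) ≤ σ 1 :=
      le_of_tendsto h1 (Filter.eventually_atTop.2 ⟨3, fun y hy => hub y hy⟩)
    linarith
  unfold phiSigma; norm_num; linarith

lemma phiSigma_ge (hmono : Monotone σ) (hodd : ∀ x : ℝ, σ (-x) - 1/2 = -(σ x - 1/2))
    (hconc : ConcaveOn ℝ (Set.Ici 0) σ) {x : ℝ} (hx : |x| ≤ 2) :
    phiSigma σ 2 ≤ phiSigma σ x := by
  wlog hx0 : 0 ≤ x generalizing x
  · have := this (x := -x) (by rwa [abs_neg]) (by linarith [not_le.1 hx0])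
    rwa [phiSigma_even hodd] at this
  rw [abs_of_nonneg hx0] at hx
  rcases le_or_gt 1 x with hx1 | hx1
  · exact phiSigma_anti hconc hx1 hx
  have step2 : phiSigma σ 2 ≤ phiSigma σ 1 := phiSigma_anti hconc le_rfl one_le_two
  have σ0 : σ 0 = 1/2 := sigma_zero hodd
  have h02 : (2:ℝ) ∈ Set.Ici (0:ℝ) := by norm_num
  have h00 : (0:ℝ) ∈ Set.Ici (0:ℝ) := by norm_num
  have hA := hconc.2 h00 h02 (by linarith : (0:ℝ) ≤ (1-x)/2) (by linarith : (0:ℝ) ≤ (x+1)/2)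
      (by ring)
  have hB := hconc.2 h00 h02 (by linarith : (0:ℝ) ≤ (x+1)/2) (by linarith : (0:ℝ) ≤ (1-x)/2)
      (by ring)
  simp only [smul_eq_mul] at hA hB
  have eA : (1-x)/2 * 0 + (x+1)/2 * 2 = x + 1 := by ring
  have eB : (x+1)/2 * 0 + (1-x)/2 * 2 = 1 - x := by ring
  rw [eA] at hA; rw [eB] at hB
  have hneg : σ (x - 1) = 1 - σ (1 - x) := by
    have := sigma_neg hodd (1 - x); rw [show -(1-x) = x - 1 by ring] at this; linarith
  have e1 : phiSigma σ 1 ≤ phiSigma σ x := by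
    unfold phiSigma at *
    norm_num at step2 ⊢
    nlinarith [hA, hB]
  linarith

end aux

section aux2
variable {σ : ℝ → ℝ}

lemma sum_phiSigma_lower (hmono : Monotone σ)
    (hodd : ∀ x : ℝ, σ (-x) - 1/2 = -(σ x - 1/2))
    (hconc : ConcaveOn ℝ (Set.Ici 0) σ) {a b x : ℝ} {n : ℕ}
    (hn : ⌈(n:ℝ)*a⌉ ≤ ⌊(n:ℝ)*b⌋ - 1) (hx : x ∈ Set.Icc a b) :
    phiSigma σ 2 ≤ ∑ k ∈ Finset.Icc ⌈(n:ℝ)*a⌉ (⌊(n:ℝ)*b⌋ - 1),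
      phiSigma σ ((n:ℝ)*x - k) := by
  set t := (n:ℝ)*x with htdef
  have hta : (n:ℝ)*a ≤ t := mul_le_mul_of_nonneg_left hx.1 (by positivity)
  have htb : t ≤ (n:ℝ)*b := mul_le_mul_of_nonneg_left hx.2 (by positivity)
  set k0 : ℤ := max ⌈(n:ℝ)*a⌉ (min ⌊t⌋ (⌊(n:ℝ)*b⌋ - 1)) with hk0
  have hmem : k0 ∈ Finset.Icc ⌈(n:ℝ)*a⌉ (⌊(n:ℝ)*b⌋ - 1) :=
    Finset.mem_Icc.2 ⟨le_max_left _ _, max_le hn (min_le_right _ _)⟩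
  have hfl : ⌊t⌋ ≤ ⌊(n:ℝ)*b⌋ := Int.floor_le_floor htb
  have hcl : ⌈(n:ℝ)*a⌉ ≤ ⌈t⌉ := Int.ceil_le_ceil hta
  have h1 : ⌊t⌋ - 1 ≤ k0 :=
    le_trans (by omega : ⌊t⌋ - 1 ≤ min ⌊t⌋ (⌊(n:ℝ)*b⌋ - 1)) (le_max_right _ _)
  have h2 : k0 ≤ ⌊t⌋ + 1 := max_le (hcl.trans (Int.ceil_le_floor_add_one t)) (by omega)
  have habs : |t - (k0:ℝ)| ≤ 2 := by
    have l1 := Int.floor_le t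
    have l2 := Int.lt_floor_add_one t
    have r1 : ((⌊t⌋:ℝ)) - 1 ≤ (k0:ℝ) := by exact_mod_cast h1
    have r2 : (k0:ℝ) ≤ ((⌊t⌋:ℝ)) + 1 := by exact_mod_cast h2
    rw [abs_le]; constructor <;> linarith
  calc phiSigma σ 2 ≤ phiSigma σ (t - k0) := phiSigma_ge hmono hodd hconc habs
    _ ≤ _ := Finset.single_le_sum (f := fun k : ℤ => phiSigma σ (t - (k:ℝ)))
        (fun k _ => phiSigma_nonneg hmono _) hmem

lemma integral_phiSigma_le (hmono : Monotone σ) (h0 : Tendsto σ atBot (nhds 0))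
    (h1 : Tendsto σ atTop (nhds 1)) (hcont : Continuous σ) {c d : ℝ} (hcd : c ≤ d) :
    ∫ x in c..d, phiSigma σ x ≤ 1 := by
  have hInt : ∀ p q : ℝ, IntervalIntegrable σ volume p q := fun p q =>
    hcont.intervalIntegrable p q
  have hI1 : IntervalIntegrable (fun x => σ (x + 1)) volume c d :=
    (hcont.comp (continuous_add_right 1)).intervalIntegrable c d
  have hI2 : IntervalIntegrable (fun x => σ (x - 1)) volume c d :=
    (hcont.comp (continuous_sub_right 1)).intervalIntegrable c d
  have e : ∫ x in c..d, phiSigma σ x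
      = ((∫ x in (d-1)..(d+1), σ x) - ∫ x in (c-1)..(c+1), σ x)/2 := by
    unfold phiSigma
    rw [intervalIntegral.integral_div, intervalIntegral.integral_sub hI1 hI2,
      intervalIntegral.integral_comp_add_right σ 1]
    have e2 : (∫ x in c..d, σ (x - 1)) = ∫ x in (c-1)..(d-1), σ x := by
      simpa [sub_eq_add_neg] using intervalIntegral.integral_comp_add_right σ (-1) (a := c) (b := d)
    rw [e2]
    have A := intervalIntegral.integral_add_adjacent_intervals
      (hInt (c-1) (c+1)) (hInt (c+1) (d+1))
    have B := intervalIntegral.integral_add_adjacent_intervals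
      (hInt (c-1) (d-1)) (hInt (d-1) (d+1))
    rw [div_eq_div_iff (by norm_num) (by norm_num)]
    linarith
  rw [e]
  have up : (∫ x in (d-1)..(d+1), σ x) ≤ 2 := by
    have := intervalIntegral.integral_mono_on (μ := volume) (by linarith : d-1 ≤ d+1)
      (hInt (d-1) (d+1)) (intervalIntegrable_const (c := (1:ℝ)))
      (fun x _ => sigma_le_one hmono h1 x)
    simpa using this.trans_eq (by simp [intervalIntegral.integral_const]; ring)
  have lo : 0 ≤ ∫ x in (c-1)..(c+1), σ x :=
    intervalIntegral.integral_nonneg (by linarith) (fun u _ => sigma_nonneg hmono h0 u)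
  linarith

lemma integral_phiSigma_scaled_le (hmono : Monotone σ) (h0 : Tendsto σ atBot (nhds 0))
    (h1 : Tendsto σ atTop (nhds 1)) (hcont : Continuous σ) {a b : ℝ} (hab : a ≤ b)
    {n : ℕ} (hn : 0 < n) (k : ℤ) :
    ∫ x in a..b, phiSigma σ ((n:ℝ)*x - (k:ℝ)) ≤ 1/(n:ℝ) := by
  have hne : (n:ℝ) ≠ 0 := Nat.cast_ne_zero.2 hn.ne'
  have e : (∫ x in a..b, phiSigma σ ((n:ℝ)*x - (k:ℝ)))
      = (n:ℝ)⁻¹ • ∫ x in ((n:ℝ)*a + -(k:ℝ))..((n:ℝ)*b + -(k:ℝ)), phiSigma σ x := by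
    rw [← intervalIntegral.integral_comp_mul_add (phiSigma σ) hne (-(k:ℝ))]
    simp [sub_eq_add_neg]
  rw [e, smul_eq_mul]
  have hle : (∫ x in ((n:ℝ)*a + -(k:ℝ))..((n:ℝ)*b + -(k:ℝ)), phiSigma σ x) ≤ 1 :=
    integral_phiSigma_le hmono h0 h1 hcont (by
      have : (n:ℝ)*a ≤ (n:ℝ)*b := mul_le_mul_of_nonneg_left hab (by positivity)
      linarith)
  have hn' : (0:ℝ) < (n:ℝ)⁻¹ := by positivity
  calc (n:ℝ)⁻¹ * _ ≤ (n:ℝ)⁻¹ * 1 := by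
        apply mul_le_mul_of_nonneg_left hle hn'.le
    _ = 1/(n:ℝ) := by rw [mul_one, one_div]

end aux2

section aux3

lemma phi_abs_convex {φ : ℝ → ℝ} (hφmono : MonotoneOn φ (Set.Ici 0))
    (hφconv : ConvexOn ℝ (Set.Ici 0) φ) : ConvexOn ℝ Set.univ (fun u => φ |u|) := by
  refine ⟨convex_univ, ?_⟩
  intro x _ y _ p q hp hq hpq
  simp only [smul_eq_mul]
  have habs : |p*x + q*y| ≤ p*|x| + q*|y| := by
    calc |p*x+q*y| ≤ |p*x| + |q*y| := abs_add_le _ _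
      _ = p*|x| + q*|y| := by
          rw [abs_mul, abs_mul, abs_of_nonneg hp, abs_of_nonneg hq]
  have h1 : φ |p*x+q*y| ≤ φ (p*|x| + q*|y|) :=
    hφmono (Set.mem_Ici.2 (abs_nonneg _)) (Set.mem_Ici.2 (by positivity)) habs
  have h2 := hφconv.2 (Set.mem_Ici.2 (abs_nonneg x)) (Set.mem_Ici.2 (abs_nonneg y)) hp hq hpq
  simp only [smul_eq_mul] at h2
  exact h1.trans h2

lemma jensen_interval {φ : ℝ → ℝ} (hφmono : MonotoneOn φ (Set.Ici 0))
    (hφconv : ConvexOn ℝ (Set.Ici 0) φ) (hφcont : Continuous φ)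
    {f : ℝ → ℝ} {c d : ℝ} (hcd : c < d)
    (hfi : IntegrableOn f (Set.Ioc c d))
    (hgi : IntegrableOn (fun u => φ |f u|) (Set.Ioc c d)) :
    φ |⨍ u in Set.Ioc c d, f u| ≤ ⨍ u in Set.Ioc c d, φ |f u| := by
  set μ := volume.restrict (Set.Ioc c d) with hμ
  haveI : IsFiniteMeasure μ := ⟨by
    rw [hμ, Measure.restrict_apply_univ, Real.volume_Ioc]; exact ENNReal.ofReal_lt_top⟩
  haveI : NeZero μ := ⟨by
    refine MeasureTheory.Measure.measure_univ_ne_zero.1 ?_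
    rw [hμ, Measure.restrict_apply_univ, Real.volume_Ioc]
    simp only [ne_eq, ENNReal.ofReal_eq_zero, not_le]
    linarith⟩
  exact (phi_abs_convex hφmono hφconv).map_average_le
    ((hφcont.comp continuous_abs).continuousOn) isClosed_univ
    (Filter.Eventually.of_forall fun _ => Set.mem_univ _) hfi hgi

end aux3

noncomputable def Kop (σ : ℝ → ℝ) (a b : ℝ) (n : ℕ) (f : ℝ → ℝ) (x : ℝ) : ℝ :=
  (∑ k ∈ Finset.Icc ⌈(n : ℝ) * a⌉ (⌊(n : ℝ) * b⌋ - 1),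
      ((n : ℝ) * ∫ u in ((k : ℝ) / n)..(((k : ℝ) + 1) / n), f u) *
        phiSigma σ ((n : ℝ) * x - (k : ℝ))) /
  (∑ k ∈ Finset.Icc ⌈(n : ℝ) * a⌉ (⌊(n : ℝ) * b⌋ - 1),
      phiSigma σ ((n : ℝ) * x - (k : ℝ)))

noncomputable def Iphi (φ : ℝ → ℝ) (a b : ℝ) (g : ℝ → ℝ) : ℝ≥0∞ :=
  ∫⁻ x in Set.Icc a b, ENNReal.ofReal (φ |g x|)

/-- modular boundedness of the Kantorovich NN operators:
`I^φ[λ K_n f] ≤ φ_σ(2)⁻¹ I^φ[λ f]` for every `λ > 0`. -/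
theorem stmt_6 (φ : ℝ → ℝ) (hφ0 : φ 0 = 0) (hφpos : ∀ u : ℝ, 0 < u → 0 < φ u)
    (hφcont : Continuous φ) (hφmono : MonotoneOn φ (Set.Ici 0))
    (hφtop : Tendsto φ atTop atTop) (hφconv : ConvexOn ℝ (Set.Ici 0) φ)
    (σ : ℝ → ℝ) (hmeas : Measurable σ) (hmono : Monotone σ)
    (h0 : Tendsto σ atBot (nhds 0)) (h1 : Tendsto σ atTop (nhds 1))
    (hodd : ∀ x : ℝ, σ (-x) - 1 / 2 = -(σ x - 1 / 2))
    (hC2 : ContDiff ℝ 2 σ) (hconc : ConcaveOn ℝ (Set.Ici 0) σ)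
    (hσ1 : σ 1 < 1)
    (α : ℝ) (hα : 0 < α)
    (hdecay : σ =O[atBot] fun x : ℝ => |x| ^ (-α - 1))
    (a b : ℝ) (hab : a < b) (n : ℕ)
    (hn : ⌈(n : ℝ) * a⌉ ≤ ⌊(n : ℝ) * b⌋ - 1)
    (f : ℝ → ℝ) (hfmeas : Measurable f)
    (hfloc : LocallyIntegrable f)
    (hfLphi : ∃ μ : ℝ, 0 < μ ∧ Iphi φ a b (fun x => μ * f x) < ⊤) :
    ∀ lam : ℝ, 0 < lam →
      Iphi φ a b (fun x => lam * Kop σ a b n f x)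
        ≤ ENNReal.ofReal (phiSigma σ 2)⁻¹ * Iphi φ a b (fun x => lam * f x) := by
  intro lam hlam
  have σcont : Continuous σ := hC2.continuous
  have hφ2 : 0 < phiSigma σ 2 := phiSigma_two_pos hmono h1 hconc hσ1
  have hφnonneg : ∀ u : ℝ, 0 ≤ u → 0 ≤ φ u := by
    intro u hu
    rcases eq_or_lt_of_le hu with rfl | h
    · exact le_of_eq hφ0.symm
    · exact (hφpos u h).le
  by_cases htop : Iphi φ a b (fun x => lam * f x) = ⊤
  · rw [htop, ENNReal.mul_top (by
      simp only [ne_eq, ENNReal.ofReal_eq_zero, not_le]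
      exact inv_pos.2 hφ2)]
    exact le_top
  have hn0 : 0 < n := by
    rcases Nat.eq_zero_or_pos n with rfl | h
    · norm_num at hn
    · exact h
  have hnR : (0:ℝ) < (n:ℝ) := by exact_mod_cast hn0
  set N := Finset.Icc ⌈(n:ℝ)*a⌉ (⌊(n:ℝ)*b⌋ - 1) with hN
  set I : ℤ → Set ℝ := fun k => Set.Ioc ((k:ℝ)/n) (((k:ℝ)+1)/n) with hIdef
  set c : ℤ → ℝ := fun k => (n:ℝ) * ∫ u in ((k:ℝ)/n)..(((k:ℝ)+1)/n), f u with hcdef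
  set w : ℤ → ℝ → ℝ := fun k x => phiSigma σ ((n:ℝ)*x - (k:ℝ)) with hwdef
  set G : ℝ → ℝ := fun x => φ |lam * f x| with hGdef
  have hIlt : ∀ k : ℤ, ((k:ℝ)/n) < (((k:ℝ)+1)/n) := by
    intro k; rw [div_lt_div_iff₀ hnR hnR]; nlinarith
  have hIsub : ∀ k ∈ N, I k ⊆ Set.Icc a b := by
    intro k hk
    rw [hN, Finset.mem_Icc] at hk
    have hk1 : (n:ℝ)*a ≤ (k:ℝ) := le_trans (Int.le_ceil _) (by exact_mod_cast hk.1)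
    have hk2 : (k:ℝ)+1 ≤ (n:ℝ)*b := by
      have h' : (k:ℤ)+1 ≤ ⌊(n:ℝ)*b⌋ := by omega
      calc (k:ℝ)+1 = (((k+1 : ℤ)):ℝ) := by push_cast; ring
        _ ≤ ((⌊(n:ℝ)*b⌋:ℤ):ℝ) := by exact_mod_cast h'
        _ ≤ (n:ℝ)*b := Int.floor_le _
    intro y hy
    obtain ⟨hy1, hy2⟩ := hy
    have e1 : a ≤ (k:ℝ)/n := (le_div_iff₀ hnR).2 (by linarith)
    have e2 : ((k:ℝ)+1)/n ≤ b := (div_le_iff₀ hnR).2 (by linarith)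
    exact ⟨le_of_lt (lt_of_le_of_lt e1 hy1), le_trans hy2 e2⟩
  have hGmeas : Measurable G := hφcont.measurable.comp (hfmeas.const_mul lam).abs
  have hGnonneg : ∀ x, 0 ≤ G x := fun x => hφnonneg _ (abs_nonneg _)
  have htop' : (∫⁻ x in Set.Icc a b, ENNReal.ofReal (G x)) ≠ ⊤ := htop
  have hGint : IntegrableOn G (Set.Icc a b) := by
    refine ⟨hGmeas.aestronglyMeasurable, ?_⟩
    rw [hasFiniteIntegral_iff_ofReal (Filter.Eventually.of_forall hGnonneg)]
    exact lt_top_iff_ne_top.2 htop'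
  have hwmeas : ∀ k : ℤ, Measurable (w k) := by
    intro k
    have hlin : Measurable fun x : ℝ => (n:ℝ)*x - (k:ℝ) := (measurable_id.const_mul _).sub_const _
    exact ((hmeas.comp (hlin.add_const 1)).sub (hmeas.comp (hlin.sub_const 1))).div_const 2
  have hwcont : ∀ k : ℤ, Continuous (w k) := by
    intro k
    have hlin : Continuous fun x : ℝ => (n:ℝ)*x - (k:ℝ) := by continuity
    exact ((σcont.comp (hlin.add (continuous_const))).sub
      (σcont.comp (hlin.sub continuous_const))).div_const 2
  have hwint : ∀ k : ℤ, IntegrableOn (w k) (Set.Icc a b) := fun k =>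
    (hwcont k).integrableOn_Icc
  have hwnonneg : ∀ (k : ℤ) (x : ℝ), 0 ≤ w k x := fun k x => phiSigma_nonneg hmono _
  -- continuous Jensen per interval
  have hBk : ∀ k ∈ N, φ |lam * c k| ≤ (n:ℝ) * ∫ u in I k, G u := by
    intro k hk
    have hfik : IntegrableOn f (I k) :=
      (hfloc.integrableOn_isCompact isCompact_Icc).mono_set Set.Ioc_subset_Icc_self
    have hGik : IntegrableOn G (I k) := hGint.mono_set (hIsub k hk)
    have hvol : (volume (I k)).toReal = 1/(n:ℝ) := by
      rw [hIdef]
      simp only [Real.volume_Ioc]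
      rw [ENNReal.toReal_ofReal (by linarith [hIlt k])]
      field_simp; ring
    have hkey := jensen_interval hφmono hφconv hφcont (f := fun u => lam * f u)
      (hIlt k) (hfik.const_mul lam) hGik
    have havg1 : (⨍ u in I k, lam * f u) = lam * c k := by
      rw [setAverage_eq, measureReal_def, hvol, smul_eq_mul, MeasureTheory.integral_const_mul, hcdef, hIdef]
      simp only []
      rw [intervalIntegral.integral_of_le (hIlt k).le, one_div, inv_inv]
      ring
    have havg2 : (⨍ u in I k, G u) = (n:ℝ) * ∫ u in I k, G u := by
      rw [setAverage_eq, measureReal_def, hvol, smul_eq_mul, one_div, inv_inv]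
    rw [havg1, havg2] at hkey
    exact hkey
  -- pointwise discrete Jensen
  have hpoint : ∀ x ∈ Set.Icc a b,
      φ |lam * Kop σ a b n f x| ≤ (phiSigma σ 2)⁻¹ * ∑ k ∈ N, w k x * φ |lam * c k| := by
    intro x hx
    have hS : phiSigma σ 2 ≤ ∑ k ∈ N, w k x :=
      sum_phiSigma_lower hmono hodd hconc hn hx
    set S := ∑ k ∈ N, w k x with hSdef
    have hSpos : 0 < S := lt_of_lt_of_le hφ2 hS
    have hrep : lam * Kop σ a b n f x = ∑ k ∈ N, (w k x / S) • (lam * c k) := by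
      simp only [Kop, smul_eq_mul]
      rw [show (∑ k ∈ N, (w k x / S) * (lam * c k))
          = (∑ k ∈ N, w k x * (lam * c k))/S by
        rw [Finset.sum_div]; exact Finset.sum_congr rfl (fun k _ => by ring)]
      rw [← mul_div_assoc]
      congr 1
      rw [Finset.mul_sum]
      exact Finset.sum_congr rfl fun k _ => by ring
    have hweights : (∑ k ∈ N, w k x / S) = 1 := by
      rw [← Finset.sum_div, ← hSdef, div_self hSpos.ne']
    have hJ := (phi_abs_convex hφmono hφconv).map_sum_le
      (t := N) (w := fun k => w k x / S) (p := fun k => lam * c k)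
      (fun k _ => div_nonneg (hwnonneg k x) hSpos.le) hweights
      (fun k _ => Set.mem_univ _)
    rw [← hrep] at hJ
    refine hJ.trans ?_
    rw [Finset.mul_sum]
    apply Finset.sum_le_sum
    intro k _
    simp only [smul_eq_mul]
    have hdd : w k x / S ≤ w k x / phiSigma σ 2 :=
      div_le_div_of_nonneg_left (hwnonneg k x) hφ2 hS
    calc w k x / S * φ |lam * c k|
        ≤ w k x / phiSigma σ 2 * φ |lam * c k| :=
          mul_le_mul_of_nonneg_right hdd (hφnonneg _ (abs_nonneg _))
      _ = (phiSigma σ 2)⁻¹ * (w k x * φ |lam * c k|) := by ring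
  -- main chain
  calc Iphi φ a b (fun x => lam * Kop σ a b n f x)
      = ∫⁻ x in Set.Icc a b, ENNReal.ofReal (φ |lam * Kop σ a b n f x|) := rfl
    _ ≤ ∫⁻ x in Set.Icc a b,
          ENNReal.ofReal ((phiSigma σ 2)⁻¹ * ∑ k ∈ N, w k x * φ |lam * c k|) := by
        apply setLIntegral_mono
        · exact (measurable_const.mul
            (Finset.measurable_sum N (fun k _ => (hwmeas k).mul_const _))).ennreal_ofReal
        · exact fun x hx => ENNReal.ofReal_le_ofReal (hpoint x hx)
    _ = ENNReal.ofReal ((phiSigma σ 2)⁻¹) * ∑ k ∈ N,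
          ENNReal.ofReal (φ |lam * c k|) * ∫⁻ x in Set.Icc a b, ENNReal.ofReal (w k x) := by
        have e : ∀ x : ℝ, ENNReal.ofReal ((phiSigma σ 2)⁻¹ * ∑ k ∈ N, w k x * φ |lam * c k|)
            = ENNReal.ofReal ((phiSigma σ 2)⁻¹) * ∑ k ∈ N,
              ENNReal.ofReal (φ |lam * c k|) * ENNReal.ofReal (w k x) := by
          intro x
          rw [ENNReal.ofReal_mul (inv_nonneg.2 hφ2.le)]
          congr 1
          rw [ENNReal.ofReal_sum_of_nonneg
            (fun k _ => mul_nonneg (hwnonneg k x) (hφnonneg _ (abs_nonneg _)))]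
          exact Finset.sum_congr rfl fun k _ => by
            rw [mul_comm, ENNReal.ofReal_mul (hφnonneg _ (abs_nonneg _))]
        rw [lintegral_congr e]
        rw [lintegral_const_mul' _ _ ENNReal.ofReal_ne_top]
        congr 1
        rw [lintegral_finset_sum _ (fun k _ => ((hwmeas k).ennreal_ofReal).const_mul _)]
        exact Finset.sum_congr rfl fun k _ =>
          lintegral_const_mul' _ _ ENNReal.ofReal_ne_top
    _ ≤ ENNReal.ofReal ((phiSigma σ 2)⁻¹) * ∑ k ∈ N,
          ∫⁻ u in I k, ENNReal.ofReal (G u) := by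
        apply mul_le_mul_right
        apply Finset.sum_le_sum
        intro k hk
        have hGik : IntegrableOn G (I k) := hGint.mono_set (hIsub k hk)
        have hw1 : (∫⁻ x in Set.Icc a b, ENNReal.ofReal (w k x)) ≤ ENNReal.ofReal (1/(n:ℝ)) := by
          rw [← MeasureTheory.ofReal_integral_eq_lintegral_ofReal (hwint k)
            (Filter.Eventually.of_forall (hwnonneg k))]
          apply ENNReal.ofReal_le_ofReal
          rw [MeasureTheory.integral_Icc_eq_integral_Ioc,
            ← intervalIntegral.integral_of_le hab.le]
          exact integral_phiSigma_scaled_le hmono h0 h1 σcont hab.le hn0 k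
        calc ENNReal.ofReal (φ |lam * c k|) * ∫⁻ x in Set.Icc a b, ENNReal.ofReal (w k x)
            ≤ ENNReal.ofReal (φ |lam * c k|) * ENNReal.ofReal (1/(n:ℝ)) :=
              mul_le_mul_right hw1 _
          _ = ENNReal.ofReal (φ |lam * c k| * (1/(n:ℝ))) :=
              (ENNReal.ofReal_mul (hφnonneg _ (abs_nonneg _))).symm
          _ ≤ ENNReal.ofReal (∫ u in I k, G u) := by
              apply ENNReal.ofReal_le_ofReal
              have h' := hBk k hk
              have h'' : φ |lam * c k| * (1/(n:ℝ))
                  ≤ ((n:ℝ) * ∫ u in I k, G u) * (1/(n:ℝ)) :=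
                mul_le_mul_of_nonneg_right h' (by positivity)
              calc φ |lam * c k| * (1/(n:ℝ)) ≤ ((n:ℝ) * ∫ u in I k, G u) * (1/(n:ℝ)) := h''
                _ = ∫ u in I k, G u := by field_simp
          _ = ∫⁻ u in I k, ENNReal.ofReal (G u) :=
              MeasureTheory.ofReal_integral_eq_lintegral_ofReal hGik
                (Filter.Eventually.of_forall hGnonneg)
    _ ≤ ENNReal.ofReal ((phiSigma σ 2)⁻¹) * Iphi φ a b (fun x => lam * f x) := by
        apply mul_le_mul_right
        have hd : Set.PairwiseDisjoint (↑N : Set ℤ) I := by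
          intro i hi j hj hij
          have : Disjoint (I i) (I j) := by
            rw [hIdef]
            simp only
            rw [Set.Ioc_disjoint_Ioc]
            rcases lt_or_gt_of_ne hij with hlt | hgt
            · have hle : ((i:ℝ)+1)/(n:ℝ) ≤ (j:ℝ)/(n:ℝ) := by
                gcongr
                exact_mod_cast (by omega : (i+1:ℤ) ≤ j)
              calc min (((i:ℝ)+1)/n) (((j:ℝ)+1)/n) ≤ ((i:ℝ)+1)/n := min_le_left _ _
                _ ≤ (j:ℝ)/n := hle
                _ ≤ max ((i:ℝ)/n) ((j:ℝ)/n) := le_max_right _ _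
            · have hle : ((j:ℝ)+1)/(n:ℝ) ≤ (i:ℝ)/(n:ℝ) := by
                gcongr
                exact_mod_cast (by omega : (j+1:ℤ) ≤ i)
              calc min (((i:ℝ)+1)/n) (((j:ℝ)+1)/n) ≤ ((j:ℝ)+1)/n := min_le_right _ _
                _ ≤ (i:ℝ)/n := hle
                _ ≤ max ((i:ℝ)/n) ((j:ℝ)/n) := le_max_left _ _
          exact this
        have hsplit := MeasureTheory.lintegral_biUnion_finset (μ := volume) hd
          (fun k _ => measurableSet_Ioc) (f := fun u => ENNReal.ofReal (G u))
        rw [← hsplit]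
        exact lintegral_mono_set (Set.iUnion₂_subset hIsub)
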